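/- arXiv:2009.10886 — 10 statements merged into one kernel-verified Lean document; each statement's English description precedes it below -/
import Mathlib

section
/- Let (P, ≤, μ, γ) be a preordered heap and let τ(a,b) = γ(μ(γ a, γ b)) be its target multiplication. Then for every a ∈ P, left source multiplication by a and right target multiplication by γ a form an adjoint pair: for all b, c ∈ P, μ(a, b) ≤ c if and only if b ≤ τ(c, γ a). In particular, τ(c, γ a) is the largest solution x of μ(a, x) ≤ c. -/
/-- In a preordered heap, left source multiplication by `a` and right
target multiplication by `γ a` form an adjoint pair; in particular `τ c (γ a)` is the
largest solution `x` of `μ a x ≤ c`. -/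
theorem preordHeap_left_adjunction {P : Type*} [Preorder P]
    (μ : P → P → P) (γ : P → P)
    (hμl : ∀ a : P, Monotone (μ a))
    (hμr : ∀ b : P, Monotone (fun a => μ a b))
    (hγ : Antitone γ)
    (hγγ : ∀ a : P, γ (γ a) = a)
    (hlreg : ∀ a b : P, μ a (γ (μ (γ b) a)) ≤ b)
    (hrreg : ∀ a b : P, μ (γ (μ a (γ b))) a ≤ b)
    (τ : P → P → P) (hτ : ∀ a b : P, τ a b = γ (μ (γ a) (γ b)))
    (a : P) :
    (∀ b c : P, μ a b ≤ c ↔ b ≤ τ c (γ a)) ∧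
    (∀ c : P, μ a (τ c (γ a)) ≤ c ∧ ∀ x : P, μ a x ≤ c → x ≤ τ c (γ a)) := by
  have key : ∀ b c : P, μ a b ≤ c ↔ b ≤ τ c (γ a) := by
    intro b c
    rw [hτ, hγγ]
    constructor
    · intro h
      have h1 : μ (γ c) a ≤ μ (γ (μ a b)) a := hμr a (hγ h)
      have h2 : μ (γ (μ a b)) a ≤ γ b := by
        have := hrreg a (γ b)
        rwa [hγγ] at this
      have := hγ (h1.trans h2)
      rwa [hγγ] at this
    · intro h
      exact (hμl a h).trans (hlreg a c)
  exact ⟨key, fun c => ⟨(key _ c).mpr le_rfl, fun x hx => (key x c).mp hx⟩⟩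
end

section
/- Let (P, ≤, μ, γ) be a preordered heap and let τ(a,b) = γ(μ(γ a, γ b)) be its target multiplication. Then for every a ∈ P, right source multiplication by a and left target multiplication by γ a form an adjoint pair: for all b, c ∈ P, μ(b, a) ≤ c if and only if b ≤ τ(γ a, c). In particular, τ(γ a, c) is the largest solution x of μ(x, a) ≤ c. -/
/-- In a preordered heap, right source multiplication by `a` and left
target multiplication by `γ a` form an adjoint pair; in particular `τ (γ a) c` is the
largest solution `x` of `μ x a ≤ c`. -/
theorem preordHeap_right_adjunction {P : Type*} [Preorder P]
    (μ : P → P → P) (γ : P → P)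
    (hμl : ∀ a : P, Monotone (μ a))
    (hμr : ∀ b : P, Monotone (fun a => μ a b))
    (hγ : Antitone γ)
    (hγγ : ∀ a : P, γ (γ a) = a)
    (hlreg : ∀ a b : P, μ a (γ (μ (γ b) a)) ≤ b)
    (hrreg : ∀ a b : P, μ (γ (μ a (γ b))) a ≤ b)
    (τ : P → P → P) (hτ : ∀ a b : P, τ a b = γ (μ (γ a) (γ b)))
    (a : P) :
    (∀ b c : P, μ b a ≤ c ↔ b ≤ τ (γ a) c) ∧
    (∀ c : P, μ (τ (γ a) c) a ≤ c ∧ ∀ x : P, μ x a ≤ c → x ≤ τ (γ a) c) := by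
  have key : ∀ b c : P, μ b a ≤ c ↔ b ≤ τ (γ a) c := by
    intro b c
    rw [hτ, hγγ]
    constructor
    · intro h
      have h1 : μ a (γ c) ≤ μ a (γ (μ b a)) := hμl a (hγ h)
      have h2 : μ a (γ (μ b a)) ≤ γ b := by
        have := hlreg a (γ b)
        rwa [hγγ] at this
      have := hγ (h1.trans h2)
      rwa [hγγ] at this
    · intro h
      exact (hμr a h).trans (hrreg a c)
  exact ⟨key, fun c => ⟨(key _ c).mpr le_rfl, fun x => (key x c).mp⟩⟩
end

section
/- (Isolating the unknown.) Let (P, ≤, μ, γ) be a preordered heap with target multiplication τ(a,b) = γ(μ(γ a, γ b)). Then for all a, x, y ∈ P: y ≤ τ(a, γ x) if and only if x ≤ τ(γ y, a). -/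
/-- Isolating the unknown: in a preordered heap with target
multiplication `τ`, for all `a x y`: `y ≤ τ a (γ x)` iff `x ≤ τ (γ y) a`. -/
theorem preordHeap_isolating_unknown {P : Type*} [Preorder P]
    (μ : P → P → P) (γ : P → P)
    (hμl : ∀ a : P, Monotone (μ a))
    (hμr : ∀ b : P, Monotone (fun a => μ a b))
    (hγ : Antitone γ)
    (hγγ : ∀ a : P, γ (γ a) = a)
    (hlreg : ∀ a b : P, μ a (γ (μ (γ b) a)) ≤ b)
    (hrreg : ∀ a b : P, μ (γ (μ a (γ b))) a ≤ b)
    (τ : P → P → P) (hτ : ∀ a b : P, τ a b = γ (μ (γ a) (γ b))) :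
    ∀ a x y : P, y ≤ τ a (γ x) ↔ x ≤ τ (γ y) a := by
  intro a x y
  rw [hτ, hτ, hγγ, hγγ]
  set c := γ a with hc
  constructor
  · intro h
    have h1 : μ (γ (μ c x)) c ≤ γ x := by
      have := hrreg c (γ x)
      rwa [hγγ] at this
    have h2 : μ y c ≤ γ x := le_trans (hμr c (by simpa [hγγ] using hγ (hγ h))) h1
    calc x = γ (γ x) := (hγγ x).symm
    _ ≤ γ (μ y c) := hγ h2
  · intro h
    have h1 : μ c (γ (μ y c)) ≤ γ y := by
      have := hlreg c (γ y)
      rwa [hγγ] at this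
    have h2 : μ c x ≤ γ y := le_trans (hμl c h) h1
    calc y = γ (γ y) := (hγγ y).symm
    _ ≤ γ (μ c x) := hγ h2
end

section
/- Let (P, ≤, μ, γ) be a preordered heap with target multiplication τ(a,b) = γ(μ(γ a, γ b)), and suppose e ∈ P is a left identity for source multiplication up to equivalence, i.e., μ(e, b) ≃ b for all b ∈ P (where x ≃ y means x ≤ y and y ≤ x). Then e is a two-sided identity for source multiplication (μ(b, e) ≃ b for all b), and γ e is a two-sided identity for target multiplication (τ(γ e, b) ≃ b and τ(b, γ e) ≃ b for all b). -/
/-- in a preordered heap, a left identity `e` (up to equivalence) for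
source multiplication is a two-sided identity for source multiplication, and `γ e` is
a two-sided identity for target multiplication. -/
theorem preordHeap_source_identity {P : Type*} [Preorder P]
    (μ : P → P → P) (γ : P → P)
    (hμl : ∀ a : P, Monotone (μ a))
    (hμr : ∀ b : P, Monotone (fun a => μ a b))
    (hγ : Antitone γ)
    (hγγ : ∀ a : P, γ (γ a) = a)
    (hlreg : ∀ a b : P, μ a (γ (μ (γ b) a)) ≤ b)
    (hrreg : ∀ a b : P, μ (γ (μ a (γ b))) a ≤ b)
    (τ : P → P → P) (hτ : ∀ a b : P, τ a b = γ (μ (γ a) (γ b)))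
    (e : P) (he : ∀ b : P, μ e b ≤ b ∧ b ≤ μ e b) :
    (∀ b : P, μ b e ≤ b ∧ b ≤ μ b e) ∧
    (∀ b : P, τ (γ e) b ≤ b ∧ b ≤ τ (γ e) b) ∧
    (∀ b : P, τ b (γ e) ≤ b ∧ b ≤ τ b (γ e)) := by
  have h1 : ∀ b : P, μ b e ≤ b ∧ b ≤ μ b e := by
    intro b
    constructor
    · have hb : b ≤ γ (μ e (γ b)) := by
        have h := hγ (he (γ b)).1
        rwa [hγγ] at h
      exact le_trans (hμr e hb) (hrreg e b)
    · have h := hlreg e (γ b)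
      rw [hγγ] at h
      have h2 : γ (μ b e) ≤ γ b := le_trans (he _).2 h
      have h3 := hγ h2
      rwa [hγγ, hγγ] at h3
  refine ⟨h1, ?_, ?_⟩
  · intro b
    rw [hτ, hγγ]
    constructor
    · have h := hγ (he (γ b)).2
      rwa [hγγ] at h
    · have h := hγ (he (γ b)).1
      rwa [hγγ] at h
  · intro b
    rw [hτ, hγγ]
    constructor
    · have h := hγ (h1 (γ b)).2
      rwa [hγγ] at h
    · have h := hγ (h1 (γ b)).1
      rwa [hγγ] at h
end

section
/- Let (P, ≤, μ, γ) be a preordered heap with target multiplication τ(a,b) = γ(μ(γ a, γ b)), and suppose e ∈ P is a left identity for target multiplication up to equivalence, i.e., τ(e, b) ≃ b for all b ∈ P (where x ≃ y means x ≤ y and y ≤ x). Then e is a two-sided identity for target multiplication (τ(b, e) ≃ b for all b), and γ e is a two-sided identity for source multiplication (μ(γ e, b) ≃ b and μ(b, γ e) ≃ b for all b). -/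
/-- in a preordered heap, a left identity `e` (up to equivalence) for
target multiplication is a two-sided identity for target multiplication, and `γ e` is
a two-sided identity for source multiplication. -/
theorem preordHeap_target_identity {P : Type*} [Preorder P]
    (μ : P → P → P) (γ : P → P)
    (hμl : ∀ a : P, Monotone (μ a))
    (hμr : ∀ b : P, Monotone (fun a => μ a b))
    (hγ : Antitone γ)
    (hγγ : ∀ a : P, γ (γ a) = a)
    (hlreg : ∀ a b : P, μ a (γ (μ (γ b) a)) ≤ b)
    (hrreg : ∀ a b : P, μ (γ (μ a (γ b))) a ≤ b)
    (τ : P → P → P) (hτ : ∀ a b : P, τ a b = γ (μ (γ a) (γ b)))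
    (e : P) (he : ∀ b : P, τ e b ≤ b ∧ b ≤ τ e b) :
    (∀ b : P, τ b e ≤ b ∧ b ≤ τ b e) ∧
    (∀ b : P, μ (γ e) b ≤ b ∧ b ≤ μ (γ e) b) ∧
    (∀ b : P, μ b (γ e) ≤ b ∧ b ≤ μ b (γ e)) := by
  -- γ e is a left identity for μ
  have hleft : ∀ c : P, μ (γ e) c ≤ c ∧ c ≤ μ (γ e) c := by
    intro c
    obtain ⟨h1, h2⟩ := he (γ c)
    rw [hτ] at h1 h2
    constructor
    · have := hγ h2
      rwa [hγγ, hγγ] at this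
    · have := hγ h1
      rwa [hγγ, hγγ] at this
  -- γ e is a right identity for μ
  have hright : ∀ c : P, μ c (γ e) ≤ c ∧ c ≤ μ c (γ e) := by
    intro c
    constructor
    · -- μ(γ(μ(γ e, γ c)), γ e) ≤ c, and c ≤ γ(μ(γ e, γ c))
      have h1 : μ (γ e) (γ c) ≤ γ c := (hleft (γ c)).1
      have h2 : c ≤ γ (μ (γ e) (γ c)) := by
        have := hγ h1; rwa [hγγ] at this
      calc μ c (γ e) ≤ μ (γ (μ (γ e) (γ c))) (γ e) := hμr _ h2
        _ ≤ c := hrreg (γ e) c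
    · -- hlreg a := γ e, b := γ c : μ(γ e, γ(μ(c, γ e))) ≤ γ c
      have h3 : μ (γ e) (γ (μ (γ (γ c)) (γ e))) ≤ γ c := hlreg (γ e) (γ c)
      rw [hγγ] at h3
      have h4 : γ (μ c (γ e)) ≤ μ (γ e) (γ (μ c (γ e))) := (hleft _).2
      have h5 : γ (μ c (γ e)) ≤ γ c := le_trans h4 h3
      have := hγ h5
      rwa [hγγ, hγγ] at this
  refine ⟨?_, hleft, hright⟩
  intro b
  rw [hτ]
  obtain ⟨h1, h2⟩ := hright (γ b)
  constructor
  · have := hγ h2; rwa [hγγ] at this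
  · have := hγ h1; rwa [hγγ] at this
end

section
/- Let S be a join-semilattice indexing a sieved preordered heap with component heaps P_x and concretizations ι. On P = Σ_{x ∈ S} P_x, define ⟨x, a⟩ ≤ ⟨y, b⟩ iff there exists z ∈ S with x ≤ z, y ≤ z, and ι_{x,z}(a) ≤_z ι_{y,z}(b), and define the source multiplication μ(⟨x, a⟩, ⟨y, b⟩) = ⟨x ⊔ y, μ_{x⊔y}(ι_{x,x⊔y}(a), ι_{y,x⊔y}(b))⟩. Then μ is monotone in both arguments with respect to ≤: if ⟨x, a⟩ ≤ ⟨z, c⟩ then μ(⟨x, a⟩, ⟨y, b⟩) ≤ μ(⟨z, c⟩, ⟨y, b⟩) and μ(⟨y, b⟩, ⟨x, a⟩) ≤ μ(⟨y, b⟩, ⟨z, c⟩). -/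
/-- the source multiplication defined on the disjoint union of the
component heaps of a sieved preordered heap is monotone in both arguments with
respect to the induced preorder. -/
theorem sievedHeap_mul_monotone {S : Type*} [SemilatticeSup S] {P : S → Type*}
    (le : ∀ x, P x → P x → Prop)
    (μ : ∀ x, P x → P x → P x)
    (γ : ∀ x, P x → P x)
    (ι : ∀ x y, x ≤ y → P x → P y)
    (hrefl : ∀ x (a : P x), le x a a)
    (htrans : ∀ x (a b c : P x), le x a b → le x b c → le x a c)
    (hμl : ∀ x (a b b' : P x), le x b b' → le x (μ x a b) (μ x a b'))
    (hμr : ∀ x (a a' b : P x), le x a a' → le x (μ x a b) (μ x a' b))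
    (hγanti : ∀ x (a b : P x), le x a b → le x (γ x b) (γ x a))
    (hγγ : ∀ x (a : P x), γ x (γ x a) = a)
    (hlreg : ∀ x (a b : P x), le x (μ x a (γ x (μ x (γ x b) a))) b)
    (hrreg : ∀ x (a b : P x), le x (μ x (γ x (μ x a (γ x b))) a) b)
    (hιmono : ∀ x y (h : x ≤ y) (a b : P x), le x a b → le y (ι x y h a) (ι x y h b))
    (hιμ : ∀ x y (h : x ≤ y) (a b : P x),
      ι x y h (μ x a b) = μ y (ι x y h a) (ι x y h b))
    (hιγ : ∀ x y (h : x ≤ y) (a : P x), ι x y h (γ x a) = γ y (ι x y h a))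
    (hιid : ∀ x (a : P x), ι x x le_rfl a = a)
    (hιcomp : ∀ x y z (hxy : x ≤ y) (hyz : y ≤ z) (a : P x),
      ι y z hyz (ι x y hxy a) = ι x z (le_trans hxy hyz) a) :
    let R : (Σ x, P x) → (Σ x, P x) → Prop := fun p q =>
      ∃ z, ∃ hx : p.1 ≤ z, ∃ hy : q.1 ≤ z, le z (ι p.1 z hx p.2) (ι q.1 z hy q.2)
    let M : (Σ x, P x) → (Σ x, P x) → (Σ x, P x) := fun p q =>
      ⟨p.1 ⊔ q.1, μ (p.1 ⊔ q.1) (ι p.1 (p.1 ⊔ q.1) le_sup_left p.2)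
        (ι q.1 (p.1 ⊔ q.1) le_sup_right q.2)⟩
    ∀ p q r : (Σ x, P x), R p r → R (M p q) (M r q) ∧ R (M q p) (M q r) := by
  intro R M p q r hpr
  obtain ⟨w, hxw, hzw, hle⟩ := hpr
  obtain ⟨x, a⟩ := p
  obtain ⟨y, b⟩ := q
  obtain ⟨z, c⟩ := r
  simp only [R, M]
  refine ⟨⟨w ⊔ y, sup_le (hxw.trans le_sup_left) le_sup_right,
      sup_le (hzw.trans le_sup_left) le_sup_right, ?_⟩,
    ⟨w ⊔ y, sup_le le_sup_right (hxw.trans le_sup_left),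
      sup_le le_sup_right (hzw.trans le_sup_left), ?_⟩⟩
  · rw [hιμ, hιμ, hιcomp, hιcomp, hιcomp, hιcomp]
    apply hμr
    rw [← hιcomp x w (w ⊔ y) hxw le_sup_left, ← hιcomp z w (w ⊔ y) hzw le_sup_left]
    exact hιmono _ _ _ _ _ hle
  · rw [hιμ, hιμ, hιcomp, hιcomp, hιcomp, hιcomp]
    apply hμl
    rw [← hιcomp x w (w ⊔ y) hxw le_sup_left, ← hιcomp z w (w ⊔ y) hzw le_sup_left]
    exact hιmono _ _ _ _ _ hle
end

section
/- Let S be a join-semilattice indexing a sieved preordered heap with component heaps P_x and concretizations ι. On P = Σ_{x ∈ S} P_x define the preorder ⟨x, a⟩ ≤ ⟨y, b⟩ iff there exists z ∈ S with x ≤ z, y ≤ z, ι_{x,z}(a) ≤_z ι_{y,z}(b); the source multiplication μ(⟨x, a⟩, ⟨y, b⟩) = ⟨x ⊔ y, μ_{x⊔y}(ι_{x,x⊔y}(a), ι_{y,x⊔y}(b))⟩; and the involution γ⟨x, a⟩ = ⟨x, γ_x a⟩. Then (P, ≤, μ, γ) is itself a preordered heap: γ is antitone with γ ∘ γ = id,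 μ is monotone in both arguments, and both the left regularity condition μ(p, γ(μ(γ q, p))) ≤ q and the right regularity condition μ(γ(μ(p, γ q)), p) ≤ q hold for all p, q ∈ P. -/
/-- the disjoint union of the component heaps of a sieved preordered
heap, equipped with the induced preorder, source multiplication and involution, is
itself a preordered heap. -/
theorem sievedHeap_isPreordHeap {S : Type*} [SemilatticeSup S] {P : S → Type*}
    (le : ∀ x, P x → P x → Prop)
    (μ : ∀ x, P x → P x → P x)
    (γ : ∀ x, P x → P x)
    (ι : ∀ x y, x ≤ y → P x → P y)
    (hrefl : ∀ x (a : P x), le x a a)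
    (htrans : ∀ x (a b c : P x), le x a b → le x b c → le x a c)
    (hμl : ∀ x (a b b' : P x), le x b b' → le x (μ x a b) (μ x a b'))
    (hμr : ∀ x (a a' b : P x), le x a a' → le x (μ x a b) (μ x a' b))
    (hγanti : ∀ x (a b : P x), le x a b → le x (γ x b) (γ x a))
    (hγγ : ∀ x (a : P x), γ x (γ x a) = a)
    (hlreg : ∀ x (a b : P x), le x (μ x a (γ x (μ x (γ x b) a))) b)
    (hrreg : ∀ x (a b : P x), le x (μ x (γ x (μ x a (γ x b))) a) b)
    (hιmono : ∀ x y (h : x ≤ y) (a b : P x), le x a b → le y (ι x y h a) (ι x y h b))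
    (hιμ : ∀ x y (h : x ≤ y) (a b : P x),
      ι x y h (μ x a b) = μ y (ι x y h a) (ι x y h b))
    (hιγ : ∀ x y (h : x ≤ y) (a : P x), ι x y h (γ x a) = γ y (ι x y h a))
    (hιid : ∀ x (a : P x), ι x x le_rfl a = a)
    (hιcomp : ∀ x y z (hxy : x ≤ y) (hyz : y ≤ z) (a : P x),
      ι y z hyz (ι x y hxy a) = ι x z (le_trans hxy hyz) a) :
    let R : (Σ x, P x) → (Σ x, P x) → Prop := fun p q =>
      ∃ z, ∃ hx : p.1 ≤ z, ∃ hy : q.1 ≤ z, le z (ι p.1 z hx p.2) (ι q.1 z hy q.2)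
    let M : (Σ x, P x) → (Σ x, P x) → (Σ x, P x) := fun p q =>
      ⟨p.1 ⊔ q.1, μ (p.1 ⊔ q.1) (ι p.1 (p.1 ⊔ q.1) le_sup_left p.2)
        (ι q.1 (p.1 ⊔ q.1) le_sup_right q.2)⟩
    let G : (Σ x, P x) → (Σ x, P x) := fun p => ⟨p.1, γ p.1 p.2⟩
    (∀ p, R p p) ∧
    (∀ p q r, R p q → R q r → R p r) ∧
    (∀ p q, R p q → R (G q) (G p)) ∧
    (∀ p, G (G p) = p) ∧
    (∀ p q r, R p q → R (M p r) (M q r)) ∧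
    (∀ p q r, R p q → R (M r p) (M r q)) ∧
    (∀ p q, R (M p (G (M (G q) p))) q) ∧
    (∀ p q, R (M (G (M p (G q))) p) q) := by
  intro R M G
  have key : ∀ (p q : Σ x, P x) (z : S) (hx : p.1 ≤ z) (hy : q.1 ≤ z),
      le z (ι p.1 z hx p.2) (ι q.1 z hy q.2) → ∀ (w : S) (hzw : z ≤ w),
      le w (ι p.1 w (hx.trans hzw) p.2) (ι q.1 w (hy.trans hzw) q.2) := by
    intro p q z hx hy h w hzw
    have := hιmono z w hzw _ _ h
    rwa [hιcomp, hιcomp] at this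
  refine ⟨?_, ?_, ?_, ?_, ?_, ?_, ?_, ?_⟩
  · intro p; exact ⟨p.1, le_rfl, le_rfl, hrefl _ _⟩
  · rintro p q r ⟨z1, hx1, hy1, h1⟩ ⟨z2, hx2, hy2, h2⟩
    refine ⟨z1 ⊔ z2, hx1.trans le_sup_left, hy2.trans le_sup_right, ?_⟩
    exact htrans _ _ _ _ (key p q z1 hx1 hy1 h1 _ le_sup_left)
      (key q r z2 hx2 hy2 h2 _ le_sup_right)
  · rintro p q ⟨z, hx, hy, h⟩
    refine ⟨z, hy, hx, ?_⟩
    show le z (ι q.1 z hy (γ q.1 q.2)) (ι p.1 z hx (γ p.1 p.2))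
    rw [hιγ, hιγ]; exact hγanti _ _ _ h
  · intro p
    show (⟨p.1, γ p.1 (γ p.1 p.2)⟩ : Σ x, P x) = p
    rw [hγγ]
  · rintro p q r ⟨z, hx, hy, h⟩
    refine ⟨z ⊔ r.1, sup_le (hx.trans le_sup_left) le_sup_right, ?_, ?_⟩
    · exact sup_le (hy.trans le_sup_left) le_sup_right
    · show le (z ⊔ r.1) (ι (p.1 ⊔ r.1) (z ⊔ r.1) _
        (μ (p.1 ⊔ r.1) (ι p.1 (p.1 ⊔ r.1) le_sup_left p.2) (ι r.1 (p.1 ⊔ r.1) le_sup_right r.2)))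
        (ι (q.1 ⊔ r.1) (z ⊔ r.1) _
        (μ (q.1 ⊔ r.1) (ι q.1 (q.1 ⊔ r.1) le_sup_left q.2) (ι r.1 (q.1 ⊔ r.1) le_sup_right r.2)))
      rw [hιμ, hιμ, hιcomp, hιcomp, hιcomp, hιcomp]
      exact hμr _ _ _ _ (key p q z hx hy h _ le_sup_left)
  · rintro p q r ⟨z, hx, hy, h⟩
    refine ⟨z ⊔ r.1, ?_, ?_, ?_⟩
    · exact sup_le le_sup_right (hx.trans le_sup_left)
    · exact sup_le le_sup_right (hy.trans le_sup_left)
    · show le (z ⊔ r.1) (ι (r.1 ⊔ p.1) (z ⊔ r.1) _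
        (μ (r.1 ⊔ p.1) (ι r.1 (r.1 ⊔ p.1) le_sup_left r.2) (ι p.1 (r.1 ⊔ p.1) le_sup_right p.2)))
        (ι (r.1 ⊔ q.1) (z ⊔ r.1) _
        (μ (r.1 ⊔ q.1) (ι r.1 (r.1 ⊔ q.1) le_sup_left r.2) (ι q.1 (r.1 ⊔ q.1) le_sup_right q.2)))
      rw [hιμ, hιμ, hιcomp, hιcomp, hιcomp, hιcomp]
      exact hμl _ _ _ _ (key p q z hx hy h _ le_sup_left)
  · intro p q
    refine ⟨p.1 ⊔ (q.1 ⊔ p.1), le_rfl, le_sup_of_le_right le_sup_left, ?_⟩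
    show le _ (ι _ _ le_rfl _) _
    rw [hιid]
    show le _ (μ _ (ι p.1 _ le_sup_left p.2)
      (ι (q.1 ⊔ p.1) _ le_sup_right (γ _ (μ _ (ι q.1 _ le_sup_left (γ q.1 q.2))
        (ι p.1 _ le_sup_right p.2))))) _
    rw [hιγ, hιμ, hιcomp, hιcomp, hιγ]
    exact hlreg _ _ _
  · intro p q
    refine ⟨p.1 ⊔ q.1 ⊔ p.1, le_rfl, le_sup_of_le_left le_sup_right, ?_⟩
    show le _ (ι _ _ le_rfl _) _
    rw [hιid]
    show le _ (μ _
      (ι (p.1 ⊔ q.1) _ le_sup_left (γ _ (μ _ (ι p.1 _ le_sup_left p.2)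
        (ι q.1 _ le_sup_right (γ q.1 q.2)))))
      (ι p.1 _ le_sup_right p.2)) _
    rw [hιγ, hιμ, hιcomp, hιcomp, hιγ]
    exact hrreg _ _ _
end

section
/- Composition of assume–guarantee contracts is monotone with respect to refinement: if C₁, C₂, C' are AG contracts over a type β of behaviors and C₁ ≼ C₂, then C₁ ∥ C' ≼ C₂ ∥ C' and C' ∥ C₁ ≼ C' ∥ C₂. -/
/-- Refinement of AG contracts: `(A, G) ≼ (A', G')` iff `G ⊆ G'` and `A' ⊆ A`. -/
def AGrefines {β : Type*} (C C' : Set β × Set β) : Prop :=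
  C.2 ⊆ C'.2 ∧ C'.1 ⊆ C.1

/-- Composition of AG contracts:
`(A, G) ∥ (A', G') = ((A ∩ A') ∪ (G ∩ G')ᶜ, G ∩ G')`. -/
def AGcomp {β : Type*} (C C' : Set β × Set β) : Set β × Set β :=
  ((C.1 ∩ C'.1) ∪ (C.2 ∩ C'.2)ᶜ, C.2 ∩ C'.2)

/-- composition of AG contracts is monotone with respect to
refinement, in both arguments. -/
theorem AGcomp_monotone {β : Type*} (C₁ C₂ C' : Set β × Set β)
    (h₁ : C₁.1 ∪ C₁.2 = Set.univ)
    (h₂ : C₂.1 ∪ C₂.2 = Set.univ)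
    (h' : C'.1 ∪ C'.2 = Set.univ)
    (h : AGrefines C₁ C₂) :
    AGrefines (AGcomp C₁ C') (AGcomp C₂ C') ∧
    AGrefines (AGcomp C' C₁) (AGcomp C' C₂) := by
  obtain ⟨hG, hA⟩ := h
  constructor <;> constructor
  · intro x ⟨hx1, hx2⟩; exact ⟨hG hx1, hx2⟩
  · rintro x (⟨hxA, hxA'⟩ | hxc)
    · exact Or.inl ⟨hA hxA, hxA'⟩
    · by_cases hx : x ∈ C₁.2 ∩ C'.2
      · exact absurd ⟨hG hx.1, hx.2⟩ hxc
      · exact Or.inr hx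
  · intro x ⟨hx1, hx2⟩; exact ⟨hx1, hG hx2⟩
  · rintro x (⟨hxA', hxA⟩ | hxc)
    · exact Or.inl ⟨hxA', hA hxA⟩
    · by_cases hx : x ∈ C'.2 ∩ C₁.2
      · exact absurd ⟨hx.1, hG hx.2⟩ hxc
      · exact Or.inr hx
end

section
/- Assume–guarantee contracts satisfy the regularity condition of a preordered heap: for all AG contracts C and C' over a type β of behaviors, C ∥ (C ∥ C'⁻¹)⁻¹ ≼ C'. Explicitly, writing C = (A, G) and C' = (A', G') with A ∪ G = β and A' ∪ G' = β, one has (A' ∪ Gᶜ, G ∩ ((A ∩ G') ∪ A'ᶜ)) ≼ (A', G'). -/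
/-- Reciprocal of an AG contract: `(A, G)⁻¹ = (G, A)`. -/
def AGrecip {β : Type*} (C : Set β × Set β) : Set β × Set β :=
  (C.2, C.1)

/-- AG contracts satisfy the regularity condition of a preordered
heap: `C ∥ (C ∥ C'⁻¹)⁻¹ ≼ C'`; explicitly,
`(A' ∪ Gᶜ, G ∩ ((A ∩ G') ∪ A'ᶜ)) ≼ (A', G')`. -/
theorem AG_regularity {β : Type*} (A G A' G' : Set β)
    (hC : A ∪ G = Set.univ) (hC' : A' ∪ G' = Set.univ) :
    AGrefines (AGcomp (A, G) (AGrecip (AGcomp (A, G) (AGrecip (A', G'))))) (A', G') ∧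
    AGrefines (A' ∪ Gᶜ, G ∩ ((A ∩ G') ∪ A'ᶜ)) (A', G') := by
  have h1 : ∀ x : β, x ∈ A ∨ x ∈ G := by
    intro x
    have := hC ▸ Set.mem_univ x
    simpa using this
  have h2 : ∀ x : β, x ∈ A' ∨ x ∈ G' := by
    intro x
    have := hC' ▸ Set.mem_univ x
    simpa using this
  constructor <;>
  · constructor <;> intro x hx <;>
      simp only [AGcomp, AGrecip, AGrefines, Set.mem_inter_iff, Set.mem_union,
        Set.mem_compl_iff, Set.mem_inter_iff] at hx ⊢ <;>
      rcases h1 x with h | h <;> rcases h2 x with h' | h' <;> tauto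
end

section
/- (Separation is left adjoint to merging for AG contracts.) Let C' be an AG contract over a type β of behaviors. Define separation by X ÷ C' = X ∥ C'⁻¹ and merging by C ⋈ C' = ((A ∩ A'), (G ∩ G') ∪ (A ∩ A')ᶜ) for C = (A, G), C' = (A', G'). Then for all AG contracts X and D: X ÷ C' ≼ D if and only if X ≼ C' ⋈ D. -/
/-- Separation of AG contracts: `X ÷ C' = X ∥ C'⁻¹`. -/
def AGsep {β : Type*} (X C' : Set β × Set β) : Set β × Set β :=
  AGcomp X (AGrecip C')

/-- Merging of AG contracts: `(A, G) ⋈ (A', G') = (A ∩ A', (G ∩ G') ∪ (A ∩ A')ᶜ)`. -/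
def AGmerge {β : Type*} (C C' : Set β × Set β) : Set β × Set β :=
  (C.1 ∩ C'.1, (C.2 ∩ C'.2) ∪ (C.1 ∩ C'.1)ᶜ)

/-- separation is left adjoint to merging for AG contracts:
`X ÷ C' ≼ D` iff `X ≼ C' ⋈ D`. -/
theorem AG_separation_adjoint_merging {β : Type*} (C' X D : Set β × Set β)
    (hC' : C'.1 ∪ C'.2 = Set.univ)
    (hX : X.1 ∪ X.2 = Set.univ)
    (hD : D.1 ∪ D.2 = Set.univ) :
    AGrefines (AGsep X C') D ↔ AGrefines X (AGmerge C' D) := by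
  have hC' := Set.eq_univ_iff_forall.mp hC'
  have hX := Set.eq_univ_iff_forall.mp hX
  have hD := Set.eq_univ_iff_forall.mp hD
  simp only [AGrefines, AGsep, AGcomp, AGrecip, AGmerge, Set.subset_def, Set.mem_inter_iff,
    Set.mem_union, Set.mem_compl_iff] at *
  constructor
  · rintro ⟨h1, h2⟩
    refine ⟨fun x hx => ?_, fun x hx => ?_⟩
    · have := h1 x; have := h2 x; have := hX x; have := hD x; have := hC' x; tauto
    · have := h1 x; have := h2 x; have := hX x; have := hD x; have := hC' x; tauto
  · rintro ⟨h1, h2⟩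
    refine ⟨fun x hx => ?_, fun x hx => ?_⟩
    · have := h1 x; have := h2 x; have := hX x; have := hD x; have := hC' x; tauto
    · have := h1 x; have := h2 x; have := hX x; have := hD x; have := hC' x; tauto
end
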